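/- arXiv:1808.03936 — 4 statements merged into one kernel-verified Lean document; each statement's English description precedes it below -/
import Mathlib

section
/- For every integer m ≥ 1, the entropy of the m-covered circle equals m·√(2π/e), i.e. sup over x₀ ∈ ℝ² and t₀ > 0 of F_{x₀,t₀}(γ_m) = m·√(2π/e), and this supremum is attained at x₀ = 0, t₀ = 1. -/
noncomputable section

open Real MeasureTheory Set Filter RealInnerProductSpace

abbrev Pt : Type := EuclideanSpace ℝ (Fin 2)

def vec2 (a b : ℝ) : Pt := (WithLp.equiv 2 (Fin 2 → ℝ)).symm ![a, b]

/-- A closed immersed plane curve of period `L`. -/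
def IsClosedCurve (L : ℝ) (γ : ℝ → Pt) : Prop :=
  0 < L ∧ ContDiff ℝ (⊤ : ℕ∞) γ ∧ (∀ t, γ (t + L) = γ t) ∧ ∀ t, deriv γ t ≠ 0

/-- The F-functional. -/
def Ffun (L : ℝ) (γ : ℝ → Pt) (x₀ : Pt) (t₀ : ℝ) : ℝ :=
  (4 * π * t₀) ^ (-(1:ℝ)/2) *
    ∫ t in (0:ℝ)..L, Real.exp (-‖γ t - x₀‖ ^ 2 / (4 * t₀)) * ‖deriv γ t‖

/-- The entropy. -/
def entropy (L : ℝ) (γ : ℝ → Pt) : ℝ :=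
  sSup {e : ℝ | ∃ x₀ : Pt, ∃ t₀ : ℝ, 0 < t₀ ∧ e = Ffun L γ x₀ t₀}

def unitTangent (γ : ℝ → Pt) (t : ℝ) : Pt := ‖deriv γ t‖⁻¹ • deriv γ t

def unitNormal (γ : ℝ → Pt) (t : ℝ) : Pt :=
  vec2 (unitTangent γ t 1) (-(unitTangent γ t 0))

def curvature (γ : ℝ → Pt) (t : ℝ) : ℝ :=
  (deriv γ t 0 * deriv (deriv γ) t 1 - deriv γ t 1 * deriv (deriv γ) t 0) / ‖deriv γ t‖ ^ 3

def turningNumber (L : ℝ) (γ : ℝ → Pt) : ℝ :=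
  (1 / (2 * π)) * ∫ t in (0:ℝ)..L, curvature γ t * ‖deriv γ t‖

def IsShrinker (γ : ℝ → Pt) : Prop :=
  ∀ t, curvature γ t = (1/2) * ⟪γ t, unitNormal γ t⟫

/-- The normal perturbation `γ + f n`. -/
def perturb (γ : ℝ → Pt) (f : ℝ → ℝ) : ℝ → Pt :=
  fun t => γ t + f t • unitNormal γ t

/-- Curve shortening flow of period `L` on `[0,T)`. -/
def IsCSF (L T : ℝ) (γ : ℝ → ℝ → Pt) : Prop :=
  0 < T ∧
  ContDiffOn ℝ (⊤ : ℕ∞) (fun p : ℝ × ℝ => γ p.1 p.2) (Set.univ ×ˢ Set.Ico 0 T) ∧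
  (∀ t ∈ Set.Ico (0:ℝ) T, IsClosedCurve L (fun u => γ u t)) ∧
  (∀ u : ℝ, ∀ t ∈ Set.Ico (0:ℝ) T,
    deriv (fun s => γ u s) t =
      curvature (fun v => γ v t) u •
        vec2 (-(unitTangent (fun v => γ v t) u 1)) (unitTangent (fun v => γ v t) u 0))

/-- `sup_u |k(u,t)| → ∞` as `t → T`. -/
def CurvatureBlowsUp (T : ℝ) (γ : ℝ → ℝ → Pt) : Prop :=
  ∀ M : ℝ, ∃ t₁ ∈ Set.Ico (0:ℝ) T, ∀ t ∈ Set.Ico t₁ T, ∃ u : ℝ,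
    M ≤ |curvature (fun v => γ v t) u|

/-- Type I singularity at time `T`. -/
def TypeISingularity (T : ℝ) (γ : ℝ → ℝ → Pt) : Prop :=
  CurvatureBlowsUp T γ ∧
  ∃ C > (0:ℝ), ∀ t ∈ Set.Ico (0:ℝ) T, ∀ u : ℝ,
    |curvature (fun v => γ v t) u| ≤ C / Real.sqrt (T - t)

/-- `f` is an entropy-unstable variation of `γ`. -/
def EntropyUnstableVariation (L : ℝ) (γ : ℝ → Pt) (f : ℝ → ℝ) : Prop :=
  ContDiff ℝ (⊤ : ℕ∞) f ∧ (∀ t, f (t + L) = f t) ∧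
  ∀ y : Pt, ∀ h : ℝ,
    (∀ᶠ ε in nhds (0:ℝ),
      DifferentiableAt ℝ (fun ε' => Ffun L (perturb γ (fun t => ε' * f t)) (ε' • y) (1 + ε' * h)) ε) ∧
    ∃ d < (0:ℝ),
      HasDerivAt (deriv (fun ε' => Ffun L (perturb γ (fun t => ε' * f t)) (ε' • y) (1 + ε' * h))) d 0

/-- The entropy index of `γ`. -/
def entropyIndex (L : ℝ) (γ : ℝ → Pt) : ℕ :=
  sSup {d : ℕ | ∃ V : Submodule ℝ (ℝ → ℝ),
    (∀ f ∈ V, ContDiff ℝ (⊤ : ℕ∞) f ∧ ∀ t, f (t + L) = f t) ∧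
    (∀ f ∈ V, f ≠ 0 → EntropyUnstableVariation L γ f) ∧
    Module.finrank ℝ V = d}

/-- The Morse index of a unit-speed shrinker. -/
def morseIndex (L : ℝ) (γ : ℝ → Pt) : ℕ :=
  sSup {d : ℕ | ∃ V : Submodule ℝ (ℝ → ℝ),
    (∀ f ∈ V, ContDiff ℝ (⊤ : ℕ∞) f ∧ ∀ t, f (t + L) = f t) ∧
    (∀ f ∈ V, f ≠ 0 →
      (∫ s in (0:ℝ)..L,
        ((deriv f s) ^ 2 - (curvature γ s ^ 2 + 1/2) * (f s) ^ 2) *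
          Real.exp (-‖γ s‖ ^ 2 / 4)) < 0) ∧
    Module.finrank ℝ V = d}

/-- The `m`-covered circle of radius `√2`, of period `2√2·π·m`. -/
def mCircle (s : ℝ) : Pt :=
  vec2 (Real.sqrt 2 * Real.cos (s / Real.sqrt 2)) (Real.sqrt 2 * Real.sin (s / Real.sqrt 2))

/-- `‖f‖_{C²} ≤ 1`. -/
def C2BoundedByOne (f : ℝ → ℝ) : Prop :=
  ∀ t, |f t| ≤ 1 ∧ |deriv f t| ≤ 1 ∧ |deriv (deriv f) t| ≤ 1

/-- A sequence of functions converges to `0` in `C^∞` (uniformly with all derivatives). -/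
def TendstoCinfty (f : ℕ → ℝ → ℝ) : Prop :=
  ∀ k : ℕ, ∀ δ > (0:ℝ), ∃ N : ℕ, ∀ i ≥ N, ∀ t : ℝ, |iteratedDeriv k (f i) t| ≤ δ
open Topology
section EntropyAux

open Real MeasureTheory Set Filter intervalIntegral

/-- modified Bessel-type integrals (unnormalized). -/
def J0 (x : ℝ) : ℝ := ∫ θ in (0:ℝ)..(2*π), Real.exp (x * Real.cos θ)
def J1 (x : ℝ) : ℝ := ∫ θ in (0:ℝ)..(2*π), Real.cos θ * Real.exp (x * Real.cos θ)
def J2 (x : ℝ) : ℝ := ∫ θ in (0:ℝ)..(2*π), Real.cos θ ^ 2 * Real.exp (x * Real.cos θ)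

lemma contJ (g : ℝ → ℝ) (hg : Continuous g) (x : ℝ) :
    Continuous fun θ => g θ * Real.exp (x * Real.cos θ) := by
  exact hg.mul ((Real.continuous_exp).comp (continuous_const.mul Real.continuous_cos))

lemma hasDerivAt_Jaux (g : ℝ → ℝ) (hg : Continuous g) (x₀ : ℝ) :
    HasDerivAt (fun x => ∫ θ in (0:ℝ)..(2*π), g θ * Real.exp (x * Real.cos θ))
      (∫ θ in (0:ℝ)..(2*π), (g θ * Real.cos θ) * Real.exp (x₀ * Real.cos θ)) x₀ := by
  have h := intervalIntegral.hasDerivAt_integral_of_dominated_loc_of_deriv_le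
    (F := fun x θ => g θ * Real.exp (x * Real.cos θ))
    (F' := fun x θ => (g θ * Real.cos θ) * Real.exp (x * Real.cos θ))
    (x₀ := x₀) (a := 0) (b := 2*π) (μ := volume)
    (bound := fun θ => |g θ| * Real.exp (|x₀| + 1))
    (Metric.ball_mem_nhds x₀ one_pos) ?meas ?int ?meas' ?bound ?bint ?diff
  · exact h.2
  case meas =>
    filter_upwards with x
    exact (contJ g hg x).aestronglyMeasurable
  case int => exact (contJ g hg x₀).intervalIntegrable _ _
  case meas' => exact (contJ (fun θ => g θ * Real.cos θ) (hg.mul Real.continuous_cos) x₀).aestronglyMeasurable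
  case bound =>
    filter_upwards with θ _ x hx
    have hc : |Real.cos θ| ≤ 1 := Real.abs_cos_le_one θ
    have h1 : |x * Real.cos θ| ≤ |x| := by
      rw [abs_mul]; nlinarith [abs_nonneg x]
    have hxx : |x| ≤ |x₀| + 1 := by
      have := mem_ball_iff_norm.mp hx
      have : |x - x₀| < 1 := by simpa [Real.norm_eq_abs] using this
      calc |x| = |x - x₀ + x₀| := by ring_nf
        _ ≤ |x - x₀| + |x₀| := abs_add_le _ _
        _ ≤ |x₀| + 1 := by linarith
    have : Real.exp (x * Real.cos θ) ≤ Real.exp (|x₀| + 1) := by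
      apply Real.exp_le_exp.mpr
      calc x * Real.cos θ ≤ |x * Real.cos θ| := le_abs_self _
        _ ≤ |x| := h1
        _ ≤ |x₀| + 1 := hxx
    calc ‖g θ * Real.cos θ * Real.exp (x * Real.cos θ)‖
        = |g θ| * |Real.cos θ| * Real.exp (x * Real.cos θ) := by
          rw [Real.norm_eq_abs, abs_mul, abs_mul, Real.abs_exp]
      _ ≤ |g θ| * 1 * Real.exp (|x₀| + 1) := by
          apply mul_le_mul
          · exact mul_le_mul_of_nonneg_left hc (abs_nonneg _)
          · exact this
          · positivity
          · positivity
      _ = |g θ| * Real.exp (|x₀| + 1) := by ring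
  case bint =>
    exact ((hg.abs.mul continuous_const)).intervalIntegrable _ _
  case diff =>
    filter_upwards with θ _ x _
    have : HasDerivAt (fun x : ℝ => x * Real.cos θ) (Real.cos θ) x := by
      simpa using (hasDerivAt_id x).mul_const (Real.cos θ)
    have := (this.exp).const_mul (g θ)
    simpa [mul_comm, mul_assoc, mul_left_comm] using this

lemma hasDerivAt_J0 (x : ℝ) : HasDerivAt J0 (J1 x) x := by
  have h := hasDerivAt_Jaux (fun _ => 1) continuous_const x
  show HasDerivAt (fun x => ∫ θ in (0:ℝ)..(2*π), Real.exp (x * Real.cos θ)) (J1 x) x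
  simpa [J0, J1] using h

lemma hasDerivAt_J1 (x : ℝ) : HasDerivAt J1 (J2 x) x := by
  have h := hasDerivAt_Jaux Real.cos Real.continuous_cos x
  show HasDerivAt (fun x => ∫ θ in (0:ℝ)..(2*π), Real.cos θ * Real.exp (x * Real.cos θ)) (J2 x) x
  simpa [J1, J2, sq] using h

lemma J1_zero : J1 0 = 0 := by
  simp [J1]

lemma J0_pos (x : ℝ) : 0 < J0 x := by
  have : (0:ℝ) < 2*π := by positivity
  apply intervalIntegral.intervalIntegral_pos_of_pos_on
    (((Real.continuous_exp).comp (continuous_const.mul Real.continuous_cos)).intervalIntegrable _ _) ?_ this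
  intro t _; exact Real.exp_pos _

lemma J2_nonneg (x : ℝ) : 0 ≤ J2 x := by
  apply intervalIntegral.integral_nonneg (by positivity)
  intro u _; positivity

lemma J1_nonneg {x : ℝ} (hx : 0 ≤ x) : 0 ≤ J1 x := by
  have mono : MonotoneOn J1 (Set.Ici (0:ℝ)) := by
    apply monotoneOn_of_deriv_nonneg (convex_Ici 0)
    · exact fun y _ => ((hasDerivAt_J1 y).continuousAt).continuousWithinAt
    · intro y _
      exact ((hasDerivAt_J1 y).differentiableAt).differentiableWithinAt
    · intro y _
      rw [(hasDerivAt_J1 y).deriv]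
      exact J2_nonneg y
  have := mono (Set.self_mem_Ici) (Set.mem_Ici.mpr hx) hx
  simpa [J1_zero] using this

lemma intInt1 (x : ℝ) : IntervalIntegrable (fun θ => Real.exp (x * Real.cos θ)) volume 0 (2*π) :=
  (Real.continuous_exp.comp (continuous_const.mul Real.continuous_cos)).intervalIntegrable _ _

lemma intInt2 (x : ℝ) :
    IntervalIntegrable (fun θ => Real.cos θ ^ 2 * Real.exp (x * Real.cos θ)) volume 0 (2*π) := by
  apply Continuous.intervalIntegrable; continuity

lemma ftc_J (x : ℝ) : J1 x = x * (J0 x - J2 x) := by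
  have hderiv : ∀ θ ∈ Set.uIcc (0:ℝ) (2*π), HasDerivAt
      (fun θ => Real.sin θ * Real.exp (x * Real.cos θ))
      (Real.cos θ * Real.exp (x * Real.cos θ)
        - x * ((1 - Real.cos θ ^ 2) * Real.exp (x * Real.cos θ))) θ := by
    intro θ _
    have h1 : HasDerivAt (fun θ : ℝ => x * Real.cos θ) (x * (-Real.sin θ)) θ :=
      (Real.hasDerivAt_cos θ).const_mul x
    have h2 := (Real.hasDerivAt_sin θ).mul h1.exp
    refine h2.congr_deriv ?_
    have hs : Real.sin θ ^ 2 = 1 - Real.cos θ ^ 2 := by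
      have := Real.sin_sq_add_cos_sq θ; linarith
    rw [← hs]; ring
  have hcont : Continuous (fun θ => Real.cos θ * Real.exp (x * Real.cos θ)
        - x * ((1 - Real.cos θ ^ 2) * Real.exp (x * Real.cos θ))) := by continuity
  have key := intervalIntegral.integral_eq_sub_of_hasDerivAt hderiv
    (hcont.intervalIntegrable _ _)
  simp only [Real.sin_zero, Real.cos_zero, zero_mul, Real.sin_two_pi, sub_self] at key
  have hsplit : (∫ θ in (0:ℝ)..(2*π), (Real.cos θ * Real.exp (x * Real.cos θ)
        - x * ((1 - Real.cos θ ^ 2) * Real.exp (x * Real.cos θ))))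
      = J1 x - x * (J0 x - J2 x) := by
    have e2 : (∫ θ in (0:ℝ)..(2*π), x * ((1 - Real.cos θ ^ 2) * Real.exp (x * Real.cos θ)))
        = x * (J0 x - J2 x) := by
      rw [intervalIntegral.integral_const_mul]
      congr 1
      have he : (fun θ => (1 - Real.cos θ ^ 2) * Real.exp (x * Real.cos θ))
          = fun θ => Real.exp (x * Real.cos θ)
              - Real.cos θ ^ 2 * Real.exp (x * Real.cos θ) := by
        funext θ; ring
      rw [he, intervalIntegral.integral_sub (intInt1 x) (intInt2 x)]
      rfl
    have i1 : IntervalIntegrable (fun θ => Real.cos θ * Real.exp (x * Real.cos θ))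
        volume 0 (2*π) := by apply Continuous.intervalIntegrable; continuity
    have i2 : IntervalIntegrable (fun θ => x * ((1 - Real.cos θ ^ 2) * Real.exp (x * Real.cos θ)))
        volume 0 (2*π) := by apply Continuous.intervalIntegrable; continuity
    rw [intervalIntegral.integral_sub i1 i2, e2]
    rfl
  rw [hsplit] at key
  linarith

/-- the key auxiliary function for the Amos-type bound. -/
def phiJ (x : ℝ) : ℝ := x * (J0 x ^ 2 - J1 x ^ 2) - J0 x * J1 x

lemma hasDerivAt_phiJ (x : ℝ) : HasDerivAt phiJ
    ((J0 x ^ 2 - J1 x ^ 2) + x * (2 * J0 x * J1 x - 2 * J1 x * J2 x)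
      - (J1 x * J1 x + J0 x * J2 x)) x := by
  have h0 := hasDerivAt_J0 x
  have h1 := hasDerivAt_J1 x
  have hA : HasDerivAt (fun x => x * (J0 x ^ 2 - J1 x ^ 2))
      (1 * (J0 x ^ 2 - J1 x ^ 2) + x * (2 * J0 x * J1 x - 2 * J1 x * J2 x)) x := by
    apply (hasDerivAt_id x).mul
    have := ((h0.pow 2).sub (h1.pow 2))
    refine this.congr_deriv ?_
    ring
  have hB : HasDerivAt (fun x => J0 x * J1 x) (J1 x * J1 x + J0 x * J2 x) x := h0.mul h1
  have := hA.sub hB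
  refine this.congr_deriv ?_
  ring

lemma phiJ_nonneg {x : ℝ} (hx : 0 ≤ x) : 0 ≤ phiJ x := by
  have mono : MonotoneOn phiJ (Set.Ici (0:ℝ)) := by
    apply monotoneOn_of_deriv_nonneg (convex_Ici 0)
    · exact fun y _ => ((hasDerivAt_phiJ y).continuousAt).continuousWithinAt
    · exact fun y _ => ((hasDerivAt_phiJ y).differentiableAt).differentiableWithinAt
    · intro y hy
      rw [interior_Ici] at hy
      have hy0 : 0 < y := hy
      rw [(hasDerivAt_phiJ y).deriv]
      have hid : y * ((J0 y ^ 2 - J1 y ^ 2) + y * (2 * J0 y * J1 y - 2 * J1 y * J2 y)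
          - (J1 y * J1 y + J0 y * J2 y)) = J0 y * J1 y := by
        have h := ftc_J y
        linear_combination (-(2*y*J1 y) - J0 y) * h
      have hpos : 0 ≤ J0 y * J1 y := mul_nonneg (J0_pos y).le (J1_nonneg hy0.le)
      nlinarith [hid, hpos, hy0, sq_nonneg y]
  have := mono (Set.self_mem_Ici) (Set.mem_Ici.mpr hx) hx
  have h0 : phiJ 0 = 0 := by simp [phiJ, J1_zero]
  linarith [this, h0.le]

/-- Amos-type bound: `(1 + √(4x²+1)) I₁(x) ≤ 2x I₀(x)`. -/
lemma amos {x : ℝ} (hx : 0 ≤ x) :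
    (1 + Real.sqrt (4*x^2+1)) * J1 x ≤ 2 * x * J0 x := by
  have hphi := phiJ_nonneg hx
  have h0 := J0_pos x
  have h1 := J1_nonneg hx
  have hJ1le : J1 x ≤ x * J0 x := by
    by_cases h : J1 x = 0
    · rw [h]; positivity
    · have h1' : 0 < J1 x := lt_of_le_of_ne h1 (Ne.symm h)
      unfold phiJ at hphi
      nlinarith
  have hw : Real.sqrt (4*x^2+1) ^ 2 = 4*x^2+1 := Real.sq_sqrt (by positivity)
  have hwpos : 0 ≤ Real.sqrt (4*x^2+1) := Real.sqrt_nonneg _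
  have hrhs : 0 ≤ 2 * x * J0 x - J1 x := by nlinarith
  have hsq : (Real.sqrt (4*x^2+1) * J1 x) ^ 2 ≤ (2 * x * J0 x - J1 x) ^ 2 := by
    rw [mul_pow, hw]
    unfold phiJ at hphi
    nlinarith
  have hfin : Real.sqrt (4*x^2+1) * J1 x ≤ 2 * x * J0 x - J1 x := by
    have h1' := Real.sqrt_le_sqrt hsq
    rwa [Real.sqrt_sq (by positivity), Real.sqrt_sq hrhs] at h1'
  linarith

/-- Key inequality: nonnegativity of the derivative numerator. -/
lemma key_ineq {R t r : ℝ} (hR : 0 < R) (ht : 0 < t) (hr : 0 ≤ r) :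
    0 ≤ ((R^2-2*t)^2 + R^2*r^2) * J0 (R*r/(2*t)) + 2*R*r*(t-R^2) * J1 (R*r/(2*t)) := by
  set β := R*r/(2*t) with hβdef
  have hβ : 0 ≤ β := by positivity
  have hJ0 := J0_pos β
  have hJ1 := J1_nonneg hβ
  rcases le_or_gt (R^2) t with hcase | hcase
  · have h2 : 0 ≤ 2*R*r*(t-R^2) := by
      apply mul_nonneg (by positivity); linarith
    have h1 : 0 ≤ ((R^2-2*t)^2 + R^2*r^2) * J0 β :=
      mul_nonneg (by positivity) hJ0.le
    nlinarith [mul_nonneg h2 hJ1]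
  · set u := Real.sqrt (R^2*r^2 + t^2) with hudef
    set w := Real.sqrt (4*β^2+1) with hwdef
    have hu0 : 0 ≤ u := Real.sqrt_nonneg _
    have hw0 : 0 ≤ w := Real.sqrt_nonneg _
    have hu2 : u^2 = R^2*r^2 + t^2 := Real.sq_sqrt (by positivity)
    have harg : R^2*r^2 + t^2 = t^2*(4*β^2+1) := by
      rw [hβdef]; field_simp; ring
    have htw : t * w = u := by
      rw [hudef, harg, Real.sqrt_mul (sq_nonneg t), Real.sqrt_sq ht.le, hwdef]
    set A := (R^2-2*t)^2 + R^2*r^2 with hAdef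
    set C := 2*R*r*(R^2-t) with hCdef
    have hC : 0 ≤ C := by
      apply mul_nonneg (by positivity); linarith
    have hamos : (1 + w) * J1 β ≤ 2*β*J0 β := amos hβ
    have hstep2t : C*(2*β)*t ≤ A*(1+w)*t := by
      have h2βt : 2*β*t = R*r := by rw [hβdef]; field_simp
      have hAtu : C*(2*β)*t = 2*R^2*r^2*(R^2-t) := by
        rw [hCdef, show C*(2*β)*t = C*(2*β*t) by ring, h2βt]; ring
      have hprod : 0 ≤ (t+u)*(u - R^2 + t)^2 := by positivity
      have hgoal : 2*R^2*r^2*(R^2-t) ≤ A*(t + u) := by nlinarith [hu2, hprod]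
      rw [hAtu]
      calc 2*R^2*r^2*(R^2-t) ≤ A*(t+u) := hgoal
        _ = A*(1+w)*t := by rw [← htw]; ring
    have hstep2 : C*(2*β) ≤ A*(1+w) := le_of_mul_le_mul_right hstep2t ht
    have hstep1 : C*((1+w)*J1 β) ≤ C*(2*β*J0 β) :=
      mul_le_mul_of_nonneg_left hamos hC
    have hstep3 : C*(2*β)*J0 β ≤ A*(1+w)*J0 β :=
      mul_le_mul_of_nonneg_right hstep2 hJ0.le
    have hfin : C*(1+w)*J1 β ≤ A*(1+w)*J0 β := by
      calc C*(1+w)*J1 β = C*((1+w)*J1 β) := by ring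
        _ ≤ C*(2*β*J0 β) := hstep1
        _ = C*(2*β)*J0 β := by ring
        _ ≤ A*(1+w)*J0 β := hstep3
    have h1w : 0 < 1 + w := by linarith
    have hdiv : C*J1 β ≤ A*J0 β := by
      have := hfin
      have h' : (1+w)*(C*J1 β) ≤ (1+w)*(A*J0 β) := by nlinarith [hfin]
      exact le_of_mul_le_mul_left h' h1w
    have : 2*R*r*(t-R^2) * J1 β = -(C * J1 β) := by rw [hCdef]; ring
    rw [this]
    linarith

/-- shifted time along the rescaled circle flow. -/
def tsh (t₀ R : ℝ) : ℝ := t₀ - 1 + R^2/2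

/-- the F-functional of the circle of radius `R`, center-distance `r`,
at time `tsh t₀ R`, in closed Bessel form. -/
def famF (t₀ r R : ℝ) : ℝ :=
  (4*π) ^ (-(1:ℝ)/2) * ((tsh t₀ R) ^ (-(1:ℝ)/2) *
    (R * (Real.exp (-(R^2+r^2)/(4*tsh t₀ R)) * J0 (R*r/(2*tsh t₀ R)))))

lemma hasDerivAt_tsh (t₀ R : ℝ) : HasDerivAt (fun R => tsh t₀ R) R R := by
  unfold tsh
  have h := ((hasDerivAt_pow 2 R).div_const 2).const_add (t₀ - 1)
  simpa using h

lemma hasDerivAt_famF (t₀ r R : ℝ) (ht : 0 < tsh t₀ R) (hR : 0 < R) :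
    HasDerivAt (famF t₀ r)
      ((4*π) ^ (-(1:ℝ)/2) * ((tsh t₀ R) ^ (-(1:ℝ)/2) *
        (Real.exp (-(R^2+r^2)/(4*tsh t₀ R)) *
        ((((R^2-2*tsh t₀ R)^2 + R^2*r^2) * J0 (R*r/(2*tsh t₀ R))
          + 2*R*r*(tsh t₀ R-R^2) * J1 (R*r/(2*tsh t₀ R))) / (4*(tsh t₀ R)^2))))) R := by
  set t := tsh t₀ R with htdef
  have htt := hasDerivAt_tsh t₀ R
  have htne : t ≠ 0 := ne_of_gt ht
  -- power factor
  have h1 : HasDerivAt (fun R => (tsh t₀ R) ^ (-(1:ℝ)/2))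
      ((-(1:ℝ)/2) * t ^ (-(1:ℝ)/2 - 1) * R) R := by
    have := (Real.hasDerivAt_rpow_const (x := t) (p := -(1:ℝ)/2) (Or.inl htne)).comp R htt
    exact this
  -- exponential factor
  have hq : HasDerivAt (fun R => -(R^2+r^2)/(4*tsh t₀ R))
      ((-(2*R)*(4*t) - (-(R^2+r^2))*(4*R))/(4*t)^2) R := by
    have hnum : HasDerivAt (fun R : ℝ => -(R^2+r^2)) (-(2*R)) R := by
      have := ((hasDerivAt_pow 2 R).add_const (r^2)).neg
      exact this.congr_deriv (by norm_num)
    have hden : HasDerivAt (fun R => 4*tsh t₀ R) (4*R) R := htt.const_mul 4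
    exact hnum.div hden (by positivity)
  have hexp := hq.exp
  -- Bessel factor
  have hβ : HasDerivAt (fun R => R*r/(2*tsh t₀ R))
      ((r*(2*t) - (R*r)*(2*R))/(2*t)^2) R := by
    have hnum : HasDerivAt (fun R : ℝ => R*r) r R := by
      simpa using (hasDerivAt_id R).mul_const r
    have hden : HasDerivAt (fun R => 2*tsh t₀ R) (2*R) R := htt.const_mul 2
    have := hnum.div hden (by positivity)
    exact this
  have hJ : HasDerivAt (fun R => J0 (R*r/(2*tsh t₀ R)))
      (J1 (R*r/(2*t)) * ((r*(2*t) - (R*r)*(2*R))/(2*t)^2)) R := by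
    have := (hasDerivAt_J0 (R*r/(2*t))).comp R hβ
    exact this
  have hinner : HasDerivAt
      (fun R => R * (Real.exp (-(R^2+r^2)/(4*tsh t₀ R)) * J0 (R*r/(2*tsh t₀ R))))
      (1 * (Real.exp (-(R^2+r^2)/(4*t)) * J0 (R*r/(2*t)))
        + R * (Real.exp (-(R^2+r^2)/(4*t)) * ((-(2*R)*(4*t) - (-(R^2+r^2))*(4*R))/(4*t)^2)
            * J0 (R*r/(2*t))
          + Real.exp (-(R^2+r^2)/(4*t)) *
            (J1 (R*r/(2*t)) * ((r*(2*t) - (R*r)*(2*R))/(2*t)^2)))) R := by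
    exact (hasDerivAt_id R).mul (hexp.mul hJ)
  have hfull := (h1.mul hinner).const_mul ((4*π) ^ (-(1:ℝ)/2))
  refine hfull.congr_deriv ?_
  have hpow : t ^ (-(1:ℝ)/2 - 1) = t ^ (-(1:ℝ)/2) / t := by
    rw [Real.rpow_sub ht, Real.rpow_one]
  rw [hpow]
  field_simp
  ring

open Topology
lemma tsh_pos {t₀ R : ℝ} (ht₀ : 0 < t₀) (hR : Real.sqrt 2 ≤ R) : 0 < tsh t₀ R := by
  have h2 : (2:ℝ) ≤ R^2 := by
    have h0 : (0:ℝ) ≤ Real.sqrt 2 := Real.sqrt_nonneg _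
    calc (2:ℝ) = Real.sqrt 2 * Real.sqrt 2 := (Real.mul_self_sqrt (by norm_num)).symm
      _ ≤ R * R := by nlinarith
      _ = R^2 := (sq R).symm
  unfold tsh; linarith

lemma sqrt2_pos : (0:ℝ) < Real.sqrt 2 := Real.sqrt_pos.mpr (by norm_num)

lemma famF_mono {t₀ r : ℝ} (ht₀ : 0 < t₀) (hr : 0 ≤ r) :
    MonotoneOn (famF t₀ r) (Set.Ici (Real.sqrt 2)) := by
  apply monotoneOn_of_deriv_nonneg (convex_Ici _)
  · intro R hR
    exact (hasDerivAt_famF t₀ r R (tsh_pos ht₀ hR) (lt_of_lt_of_le sqrt2_pos hR)).continuousAt.continuousWithinAt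
  · intro R hR
    rw [interior_Ici] at hR
    exact (hasDerivAt_famF t₀ r R (tsh_pos ht₀ hR.le) (lt_of_lt_of_le sqrt2_pos hR.le)).differentiableAt.differentiableWithinAt
  · intro R hR
    rw [interior_Ici] at hR
    have ht := tsh_pos ht₀ hR.le
    have hRpos := lt_of_lt_of_le sqrt2_pos hR.le
    rw [(hasDerivAt_famF t₀ r R ht hRpos).deriv]
    have hkey := key_ineq hRpos ht hr
    have h1 : (0:ℝ) ≤ (4*π) ^ (-(1:ℝ)/2) := Real.rpow_nonneg (by positivity) _
    have h2 : (0:ℝ) ≤ (tsh t₀ R) ^ (-(1:ℝ)/2) := Real.rpow_nonneg ht.le _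
    have h3 : (0:ℝ) ≤ Real.exp (-(R^2+r^2)/(4*tsh t₀ R)) := (Real.exp_pos _).le
    have h4 : (0:ℝ) ≤ (((R^2-2*tsh t₀ R)^2 + R^2*r^2) * J0 (R*r/(2*tsh t₀ R))
          + 2*R*r*(tsh t₀ R-R^2) * J1 (R*r/(2*tsh t₀ R))) / (4*(tsh t₀ R)^2) := by
      apply div_nonneg hkey (by positivity)
    positivity

lemma J0_zero : J0 0 = 2*π := by
  simp [J0]

lemma tsh_atTop (t₀ : ℝ) : Filter.Tendsto (fun R => tsh t₀ R) Filter.atTop Filter.atTop := by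
  unfold tsh
  apply Filter.tendsto_atTop_add_const_left
  exact (tendsto_pow_atTop (two_ne_zero)).atTop_div_const (by norm_num)

lemma ratio_tendsto (t₀ : ℝ) (ht₀ : 0 < t₀) :
    Filter.Tendsto (fun R => R^2/(tsh t₀ R)) Filter.atTop (𝓝 2) := by
  have h0 : Filter.Tendsto (fun R : ℝ => (t₀-1)/R^2 + 1/2) Filter.atTop (𝓝 (0 + 1/2)) := by
    apply Filter.Tendsto.add_const
    exact Filter.Tendsto.div_atTop tendsto_const_nhds (tendsto_pow_atTop two_ne_zero)
  have hinv := h0.inv₀ (by norm_num)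
  have : ((0:ℝ) + 1/2)⁻¹ = 2 := by norm_num
  rw [this] at hinv
  apply hinv.congr'
  filter_upwards [Filter.eventually_ge_atTop (max 1 (Real.sqrt 2))] with R hR
  have hR1 : (1:ℝ) ≤ R := le_trans (le_max_left _ _) hR
  have ht : 0 < tsh t₀ R := tsh_pos ht₀ (le_trans (le_max_right _ _) hR)
  have hRne : R ≠ 0 := by linarith
  have htne : tsh t₀ R ≠ 0 := ne_of_gt ht
  unfold tsh at *
  field_simp

lemma famF_tendsto {t₀ r : ℝ} (ht₀ : 0 < t₀) (hr : 0 ≤ r) :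
    Filter.Tendsto (famF t₀ r) Filter.atTop
      (𝓝 ((4*π) ^ (-(1:ℝ)/2) * (Real.sqrt 2 * (Real.exp (-(2+0)/4) * (2*π))))) := by
  have h2 := ratio_tendsto t₀ ht₀
  have htop := tsh_atTop t₀
  have hrt : Filter.Tendsto (fun R => r^2/(tsh t₀ R)) Filter.atTop (𝓝 0) :=
    Filter.Tendsto.div_atTop tendsto_const_nhds htop
  -- sqrt factor
  have hA : Filter.Tendsto (fun R => Real.sqrt (R^2/(tsh t₀ R))) Filter.atTop
      (𝓝 (Real.sqrt 2)) := (Real.continuous_sqrt.tendsto 2).comp h2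
  -- exponential factor
  have hqlim : Filter.Tendsto (fun R => -(R^2/(tsh t₀ R) + r^2/(tsh t₀ R))/4)
      Filter.atTop (𝓝 (-(2+0)/4)) := ((h2.add hrt).neg).div_const 4
  have hE : Filter.Tendsto (fun R => Real.exp (-(R^2/(tsh t₀ R) + r^2/(tsh t₀ R))/4))
      Filter.atTop (𝓝 (Real.exp (-(2+0)/4))) := (Real.continuous_exp.tendsto _).comp hqlim
  -- Bessel factor
  have hβ : Filter.Tendsto (fun R => R^2/(tsh t₀ R) * (r/(2*R))) Filter.atTop (𝓝 (2*0)) := by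
    apply h2.mul
    apply Filter.Tendsto.div_atTop tendsto_const_nhds
    exact (Filter.tendsto_id.const_mul_atTop two_pos)
  have hJ : Filter.Tendsto (fun R => J0 (R^2/(tsh t₀ R) * (r/(2*R)))) Filter.atTop
      (𝓝 (2*π)) := by
    have hc : Filter.Tendsto J0 (𝓝 (2*0)) (𝓝 (2*π)) := by
      have := (hasDerivAt_J0 (2*0 : ℝ)).continuousAt.tendsto
      rwa [show J0 (2*0 : ℝ) = 2*π by rw [show (2*0 : ℝ) = 0 by norm_num, J0_zero]] at this
    exact hc.comp hβ
  have hmain := (hA.mul (hE.mul hJ)).const_mul ((4*π) ^ (-(1:ℝ)/2))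
  apply hmain.congr'
  filter_upwards [Filter.eventually_ge_atTop (max 1 (Real.sqrt 2))] with R hR
  have hR1 : (1:ℝ) ≤ R := le_trans (le_max_left _ _) hR
  have hRpos : (0:ℝ) < R := by linarith
  have ht : 0 < tsh t₀ R := tsh_pos ht₀ (le_trans (le_max_right _ _) hR)
  unfold famF
  have hsqrt : Real.sqrt (R^2/(tsh t₀ R)) = (tsh t₀ R) ^ (-(1:ℝ)/2) * R := by
    rw [Real.sqrt_div (sq_nonneg R), Real.sqrt_sq hRpos.le]
    rw [show (-(1:ℝ)/2) = -(1/(2:ℝ)) by norm_num, Real.rpow_neg ht.le, ← Real.sqrt_eq_rpow]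
    field_simp
  have hexp : -(R^2/(tsh t₀ R) + r^2/(tsh t₀ R))/4 = -(R^2+r^2)/(4*tsh t₀ R) := by
    rw [← add_div, neg_div, neg_div, div_div, mul_comm (tsh t₀ R) 4]
  have hbeta : R^2/(tsh t₀ R) * (r/(2*R)) = R*r/(2*tsh t₀ R) := by
    have hRne : R ≠ 0 := ne_of_gt hRpos
    have htne : tsh t₀ R ≠ 0 := ne_of_gt ht
    field_simp
  rw [hsqrt, hexp, hbeta]
  ring

lemma limit_value_eq :
    (4*π) ^ (-(1:ℝ)/2) * (Real.sqrt 2 * (Real.exp (-(2+0)/4) * (2*π)))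
      = Real.sqrt (2*π/Real.exp 1) := by
  have hπ : (0:ℝ) < π := Real.pi_pos
  have h4π : (4*π) ^ (-(1:ℝ)/2) = (Real.sqrt (4*π))⁻¹ := by
    rw [show (-(1:ℝ)/2) = -(1/(2:ℝ)) by norm_num, Real.rpow_neg (by positivity),
      ← Real.sqrt_eq_rpow]
  have hexp : Real.exp (-(2+0)/4) = (Real.sqrt (Real.exp 1))⁻¹ := by
    rw [show (-(2+0)/4 : ℝ) = -(1/2) by norm_num, Real.exp_neg, ← Real.exp_half]
  have hsplit : Real.sqrt (2*π/Real.exp 1) = Real.sqrt 2 * Real.sqrt π / Real.sqrt (Real.exp 1) := by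
    rw [Real.sqrt_div (by positivity), Real.sqrt_mul (by norm_num)]
  have h4 : Real.sqrt (4*π) = 2 * Real.sqrt π := by
    rw [show (4*π : ℝ) = 2^2 * π by ring, Real.sqrt_mul (by positivity), Real.sqrt_sq (by norm_num)]
  have hπne : Real.sqrt π ≠ 0 := by positivity
  have hene : Real.sqrt (Real.exp 1) ≠ 0 := by positivity
  have hππ' : Real.sqrt π ^ 2 = π := Real.sq_sqrt hπ.le
  rw [h4π, hexp, hsplit, h4]
  field_simp
  linear_combination (-1) * hππ'

lemma famF_le {t₀ r : ℝ} (ht₀ : 0 < t₀) (hr : 0 ≤ r) :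
    famF t₀ r (Real.sqrt 2) ≤ Real.sqrt (2*π/Real.exp 1) := by
  rw [← limit_value_eq]
  apply ge_of_tendsto (famF_tendsto ht₀ hr)
  filter_upwards [Filter.eventually_ge_atTop (Real.sqrt 2)] with R hR
  exact famF_mono ht₀ hr (Set.self_mem_Ici) hR hR
lemma vec2_apply0 (a b : ℝ) : vec2 a b 0 = a := by simp [vec2]
lemma vec2_apply1 (a b : ℝ) : vec2 a b 1 = b := by simp [vec2]

lemma vec2_smul_add (a b : ℝ) : vec2 a b = a • vec2 1 0 + b • vec2 0 1 := by
  ext i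
  fin_cases i <;> simp [vec2]

lemma norm_vec2 (a b : ℝ) : ‖vec2 a b‖ = Real.sqrt (a^2 + b^2) := by
  rw [EuclideanSpace.norm_eq]
  congr 1
  rw [Fin.sum_univ_two, vec2_apply0, vec2_apply1]
  simp [Real.norm_eq_abs, sq_abs]

lemma hasDerivAt_vec2 (f g : ℝ → ℝ) (f' g' : ℝ) (t : ℝ)
    (hf : HasDerivAt f f' t) (hg : HasDerivAt g g' t) :
    HasDerivAt (fun t => vec2 (f t) (g t)) (vec2 f' g') t := by
  have h1 := (hf.smul_const (vec2 1 0)).add (hg.smul_const (vec2 0 1))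
  have e : ∀ u, vec2 (f u) (g u) = f u • vec2 1 0 + g u • vec2 0 1 :=
    fun u => vec2_smul_add _ _
  have heq : (fun t => vec2 (f t) (g t)) = (fun t => f t • vec2 1 0 + g t • vec2 0 1) :=
    funext e
  rw [heq, vec2_smul_add f' g']
  exact h1

lemma hasDerivAt_mCircle (t : ℝ) :
    HasDerivAt mCircle
      (vec2 (-Real.sin (t / Real.sqrt 2)) (Real.cos (t / Real.sqrt 2))) t := by
  have hc2 : Real.sqrt 2 ≠ 0 := by positivity
  have hdiv : HasDerivAt (fun t : ℝ => t / Real.sqrt 2) (1 / Real.sqrt 2) t := by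
    simpa using (hasDerivAt_id t).div_const (Real.sqrt 2)
  have hcos : HasDerivAt (fun t : ℝ => Real.sqrt 2 * Real.cos (t / Real.sqrt 2))
      (-Real.sin (t / Real.sqrt 2)) t := by
    have := ((Real.hasDerivAt_cos (t / Real.sqrt 2)).comp t hdiv).const_mul (Real.sqrt 2)
    refine this.congr_deriv ?_
    field_simp
  have hsin : HasDerivAt (fun t : ℝ => Real.sqrt 2 * Real.sin (t / Real.sqrt 2))
      (Real.cos (t / Real.sqrt 2)) t := by
    have := ((Real.hasDerivAt_sin (t / Real.sqrt 2)).comp t hdiv).const_mul (Real.sqrt 2)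
    refine this.congr_deriv ?_
    field_simp
  exact hasDerivAt_vec2 _ _ _ _ t hcos hsin

lemma norm_deriv_mCircle (t : ℝ) : ‖deriv mCircle t‖ = 1 := by
  rw [(hasDerivAt_mCircle t).deriv, norm_vec2]
  have h : (-Real.sin (t / Real.sqrt 2))^2 + (Real.cos (t / Real.sqrt 2))^2 = 1 := by
    have := Real.sin_sq_add_cos_sq (t / Real.sqrt 2); nlinarith
  rw [h, Real.sqrt_one]

lemma normsq_sub_mCircle (x₀ : Pt) (t : ℝ) :
    ‖mCircle t - x₀‖^2 = 2 + (x₀ 0^2 + x₀ 1^2)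
      - 2*Real.sqrt 2*(x₀ 0 * Real.cos (t / Real.sqrt 2) + x₀ 1 * Real.sin (t / Real.sqrt 2)) := by
  have hn : ‖mCircle t - x₀‖^2
      = ((mCircle t - x₀) 0)^2 + ((mCircle t - x₀) 1)^2 := by
    rw [EuclideanSpace.norm_eq, Fin.sum_univ_two, Real.sq_sqrt (by positivity)]
    simp [Real.norm_eq_abs, sq_abs]
  have h0 : (mCircle t - x₀) 0 = Real.sqrt 2 * Real.cos (t / Real.sqrt 2) - x₀ 0 := by
    simp [mCircle, vec2_apply0]
  have h1 : (mCircle t - x₀) 1 = Real.sqrt 2 * Real.sin (t / Real.sqrt 2) - x₀ 1 := by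
    simp [mCircle, vec2_apply1]
  rw [hn, h0, h1]
  have hsc := Real.sin_sq_add_cos_sq (t / Real.sqrt 2)
  have h2 : Real.sqrt 2 ^ 2 = 2 := Real.sq_sqrt (by norm_num)
  nlinarith [hsc, h2]

lemma tsh_sqrt2 (t₀ : ℝ) : tsh t₀ (Real.sqrt 2) = t₀ := by
  unfold tsh
  rw [Real.sq_sqrt (by norm_num : (0:ℝ) ≤ 2)]
  ring

lemma Ffun_eq (m : ℕ) (x₀ : Pt) (t₀ : ℝ) (ht₀ : 0 < t₀) :
    Ffun (2 * Real.sqrt 2 * π * m) mCircle x₀ t₀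
      = m * famF t₀ (Real.sqrt (x₀ 0^2 + x₀ 1^2)) (Real.sqrt 2) := by
  have hπ := Real.pi_pos
  have ht₀' : t₀ ≠ 0 := ne_of_gt ht₀
  set z : ℂ := ⟨x₀ 0, x₀ 1⟩ with hz
  set r := ‖z‖ with hrdef
  set φ := Complex.arg z with hφdef
  have hre : z.re = x₀ 0 := rfl
  have him : z.im = x₀ 1 := rfl
  have hc : r * Real.cos φ = x₀ 0 := by
    rw [hrdef, hφdef]; exact (Complex.norm_mul_cos_arg z).trans hre
  have hs : r * Real.sin φ = x₀ 1 := by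
    rw [hrdef, hφdef]; exact (Complex.norm_mul_sin_arg z).trans him
  have hr2 : r^2 = x₀ 0^2 + x₀ 1^2 := by
    rw [hrdef, Complex.sq_norm, Complex.normSq_apply, hz]
    ring
  have hrr : Real.sqrt (x₀ 0^2 + x₀ 1^2) = r := by
    rw [← hr2, Real.sqrt_sq (norm_nonneg z)]
  rw [hrr]
  set c2 := Real.sqrt 2 with hc2def
  have hc2 : 0 < c2 := Real.sqrt_pos.mpr (by norm_num)
  have hc22 : c2^2 = 2 := Real.sq_sqrt (by norm_num)
  set K := c2 * r / (2*t₀) with hKdef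
  set L := 2 * c2 * π * m with hLdef
  -- Step A: integrand rewrite
  have hA : Ffun L mCircle x₀ t₀
      = (4*π*t₀) ^ (-(1:ℝ)/2) *
        ∫ t in (0:ℝ)..L, Real.exp (-(2+r^2)/(4*t₀)) * Real.exp (K * Real.cos (t/c2 - φ)) := by
    unfold Ffun
    congr 1
    apply intervalIntegral.integral_congr
    intro t _
    dsimp only
    rw [norm_deriv_mCircle, mul_one, normsq_sub_mCircle, ← Real.exp_add]
    congr 1
    have hcossub : x₀ 0 * Real.cos (t/c2) + x₀ 1 * Real.sin (t/c2)
        = r * Real.cos (t/c2 - φ) := by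
      rw [Real.cos_sub]
      linear_combination (-(Real.cos (t/c2))) * hc + (-(Real.sin (t/c2))) * hs
    rw [← hr2, hcossub, hKdef]
    field_simp [ht₀']
    ring
  -- Step B+C: pull out constant and change variables
  have hB : (∫ t in (0:ℝ)..L, Real.exp (-(2+r^2)/(4*t₀)) * Real.exp (K * Real.cos (t/c2 - φ)))
      = Real.exp (-(2+r^2)/(4*t₀)) * ∫ t in (0:ℝ)..L, Real.exp (K * Real.cos (t/c2 - φ)) :=
    intervalIntegral.integral_const_mul _ _
  have hC : (∫ t in (0:ℝ)..L, Real.exp (K * Real.cos (t/c2 - φ)))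
      = c2 * ∫ u in (0:ℝ)..(2*π*m), Real.exp (K * Real.cos (u - φ)) := by
    have h := intervalIntegral.integral_comp_div (a := (0:ℝ)) (b := L)
      (c := c2) (f := fun u => Real.exp (K * Real.cos (u - φ))) (ne_of_gt hc2)
    have h0 : (0:ℝ)/c2 = 0 := zero_div _
    have hLc : L/c2 = 2*π*m := by rw [hLdef]; field_simp
    rw [h0, hLc] at h
    rw [h, smul_eq_mul]
  -- Step D: periodicity, m copies
  have hcontper : Continuous (fun u => Real.exp (K * Real.cos (u - φ))) := by continuity
  have hper : Function.Periodic (fun u => Real.exp (K * Real.cos (u - φ))) (2*π) := by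
    intro u
    simp only
    rw [show u + 2*π - φ = (u - φ) + 2*π by ring, Real.cos_add_two_pi]
  have hD : (∫ u in (0:ℝ)..(2*π*m), Real.exp (K * Real.cos (u - φ)))
      = m * ∫ u in (0:ℝ)..(2*π), Real.exp (K * Real.cos (u - φ)) := by
    have h := hper.intervalIntegral_add_zsmul_eq (m:ℤ) 0
      (fun a b => hcontper.intervalIntegrable a b)
    have h1 : (0:ℝ) + (m:ℤ) • (2*π) = 2*π*m := by
      rw [zsmul_eq_mul]; push_cast; ring
    have h2 : (0:ℝ) + 2*π = 2*π := by ring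
    rw [h1, h2] at h
    rw [h, zsmul_eq_mul]
    push_cast
    ring
  -- Step E: rotation invariance
  have hE : (∫ u in (0:ℝ)..(2*π), Real.exp (K * Real.cos (u - φ))) = J0 K := by
    have h1 := intervalIntegral.integral_comp_sub_right
      (a := (0:ℝ)) (b := 2*π) (fun v => Real.exp (K * Real.cos v)) φ
    have hperg : Function.Periodic (fun v => Real.exp (K * Real.cos v)) (2*π) := by
      intro v; simp only; rw [Real.cos_add_two_pi]
    have h2 := hperg.intervalIntegral_add_eq (-φ) 0
    rw [show (0:ℝ) - φ = -φ by ring, show 2*π - φ = -φ + 2*π by ring] at h1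
    rw [show (0:ℝ) + 2*π = 2*π by ring] at h2
    rw [h1, h2]
    rfl
  rw [hA, hB, hC, hD, hE]
  -- final algebra
  unfold famF
  rw [tsh_sqrt2]
  have hmul : (4*π*t₀) ^ (-(1:ℝ)/2) = (4*π) ^ (-(1:ℝ)/2) * t₀ ^ (-(1:ℝ)/2) := by
    rw [Real.mul_rpow (by positivity) ht₀.le]
  rw [hmul]
  simp only [hKdef, hc2def, Real.sq_sqrt (show (0:ℝ) ≤ 2 by norm_num)]
  ring

lemma Ffun_le (m : ℕ) (x₀ : Pt) (t₀ : ℝ) (ht₀ : 0 < t₀) :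
    Ffun (2 * Real.sqrt 2 * π * m) mCircle x₀ t₀
      ≤ m * Real.sqrt (2*π/Real.exp 1) := by
  rw [Ffun_eq m x₀ t₀ ht₀]
  have := famF_le ht₀ (Real.sqrt_nonneg (x₀ 0^2 + x₀ 1^2))
  exact mul_le_mul_of_nonneg_left this (Nat.cast_nonneg m)

lemma Ffun_val (m : ℕ) :
    Ffun (2 * Real.sqrt 2 * π * m) mCircle (0 : Pt) 1
      = m * Real.sqrt (2*π/Real.exp 1) := by
  rw [Ffun_eq m 0 1 one_pos]
  congr 1
  have h0 : Real.sqrt (((0:Pt) 0)^2 + ((0:Pt) 1)^2) = 0 := by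
    norm_num
  rw [h0, ← limit_value_eq]
  unfold famF
  rw [tsh_sqrt2]
  rw [Real.one_rpow, Real.sq_sqrt (by norm_num : (0:ℝ) ≤ 2)]
  have e1 : -(2+(0:ℝ)^2)/(4*1) = -(2+0)/4 := by norm_num
  have e2 : Real.sqrt 2*(0:ℝ)/(2*1) = 0 := by ring
  rw [e1, e2, J0_zero]
  ring

end EntropyAux

/-- the entropy of the `m`-covered circle equals `m·√(2π/e)` and the
supremum is attained at `x₀ = 0`, `t₀ = 1`. -/
theorem entropy_mCircle (m : ℕ) (hm : 1 ≤ m) :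
    entropy (2 * Real.sqrt 2 * π * m) mCircle = (m : ℝ) * Real.sqrt (2 * π / Real.exp 1) ∧
    Ffun (2 * Real.sqrt 2 * π * m) mCircle (0 : Pt) 1 =
      (m : ℝ) * Real.sqrt (2 * π / Real.exp 1) := by
  constructor
  · unfold entropy
    apply IsGreatest.csSup_eq
    constructor
    · exact ⟨0, 1, one_pos, (Ffun_val m).symm⟩
    · rintro e ⟨x₀, t₀, ht₀, rfl⟩
      exact Ffun_le m x₀ t₀ ht₀
  · exact Ffun_val m
end
end

section
/- Let γ be a closed immersed plane curve of period L and let K ⊂ ℝ² × (0,∞) be compact. Then there exist ε₀ > 0 and C > 0, depending only on γ and K, such that for every smooth L-periodic function f : ℝ → ℝ with ‖f‖_{C²} ≤ 1, every ε with 0 ≤ ε < ε₀, and every (x₀,t₀) ∈ K, one has |F_{x₀,t₀}(γ + ε f n) − F_{x₀,t₀}(γ)| ≤ C·ε. -/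
noncomputable section

open Real MeasureTheory Set Filter RealInnerProductSpace

lemma aux_exp_lip {a b : ℝ} (ha : 0 ≤ a) (hb : 0 ≤ b) :
    |Real.exp (-a) - Real.exp (-b)| ≤ |a - b| := by
  wlog h : b ≤ a generalizing a b
  · rw [abs_sub_comm, abs_sub_comm a b]; exact this hb ha (le_of_not_ge h)
  have h1 : Real.exp (-a) = Real.exp (-b) * Real.exp (b - a) := by
    rw [← Real.exp_add]; ring_nf
  have h2 := Real.add_one_le_exp (b - a)
  have h3 : Real.exp (-b) ≤ 1 := Real.exp_le_one_iff.mpr (by linarith)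
  have h4 : 0 < Real.exp (-b) := Real.exp_pos _
  rw [abs_of_nonpos (by nlinarith [Real.exp_le_exp.mpr (neg_le_neg h)]),
    abs_of_nonneg (by linarith)]
  nlinarith

lemma aux_smooth_normal (γ : ℝ → Pt) (hsm : ContDiff ℝ (⊤:ℕ∞) γ)
    (hne : ∀ t, deriv γ t ≠ 0) : ContDiff ℝ (⊤:ℕ∞) (unitNormal γ) := by
  have hd : ContDiff ℝ (⊤:ℕ∞) (deriv γ) := (contDiff_infty_iff_deriv.mp hsm).2
  have hT : ContDiff ℝ (⊤:ℕ∞) (unitTangent γ) := by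
    rw [contDiff_iff_contDiffAt]
    intro t
    exact ((hd.contDiffAt.norm ℝ (hne t)).inv (norm_ne_zero_iff.2 (hne t))).smul hd.contDiffAt
  have hTi : ∀ i, ContDiff ℝ (⊤:ℕ∞) (fun t => unitTangent γ t i) := fun i =>
    ((EuclideanSpace.proj (𝕜 := ℝ) i).contDiff.comp hT : )
  rw [contDiff_euclidean]
  intro i
  have : ∀ t, unitNormal γ t i = ![unitTangent γ t 1, -(unitTangent γ t 0)] i := fun t => rfl
  simp only [this]
  fin_cases i
  · simpa using hTi 1
  · simpa using (hTi 0).neg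

lemma aux_norm_normal (γ : ℝ → Pt) (hne : ∀ t, deriv γ t ≠ 0) (t : ℝ) :
    ‖unitNormal γ t‖ = 1 := by
  have hT : ‖unitTangent γ t‖ = 1 := by
    rw [unitTangent, norm_smul, norm_inv, norm_norm]
    exact inv_mul_cancel₀ (norm_ne_zero_iff.2 (hne t))
  have h1 : ‖unitNormal γ t‖ = ‖unitTangent γ t‖ := by
    rw [EuclideanSpace.norm_eq, EuclideanSpace.norm_eq]
    congr 1
    have e0 : unitNormal γ t 0 = unitTangent γ t 1 := rfl
    have e1 : unitNormal γ t 1 = -(unitTangent γ t 0) := by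
      show (![unitTangent γ t 1, -(unitTangent γ t 0)] : Fin 2 → ℝ) 1 = _
      simp
    rw [Fin.sum_univ_two, Fin.sum_univ_two, e0, e1, norm_neg]
    ring
  rw [h1, hT]

set_option maxHeartbeats 1000000 in
/-- the F-functional is Lipschitz continuous under small normal
perturbations, uniformly over `(x₀,t₀)` in a compact subset of `ℝ²×(0,∞)`. -/
theorem Ffun_continuous_on_compact (L : ℝ) (γ : ℝ → Pt) (hγ : IsClosedCurve L γ)
    (K : Set (Pt × ℝ)) (hK : IsCompact K) (hKpos : ∀ p ∈ K, 0 < p.2) :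
    ∃ ε₀ > (0:ℝ), ∃ C > (0:ℝ),
      ∀ f : ℝ → ℝ, ContDiff ℝ (⊤ : ℕ∞) f → (∀ t, f (t + L) = f t) → C2BoundedByOne f →
        ∀ ε : ℝ, 0 ≤ ε → ε < ε₀ → ∀ p ∈ K,
          |Ffun L (perturb γ (fun t => ε * f t)) p.1 p.2 - Ffun L γ p.1 p.2| ≤ C * ε := by
  obtain ⟨hL, hsm, hper, hne⟩ := hγ
  have hsm' : ContDiff ℝ (⊤:ℕ∞) γ := hsm.of_le (by simp)
  have hn : ContDiff ℝ (⊤:ℕ∞) (unitNormal γ) := aux_smooth_normal γ hsm' hne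
  have hnn : ∀ t, ‖unitNormal γ t‖ = 1 := aux_norm_normal γ hne
  have h1top : (1 : WithTop ℕ∞) ≤ ((⊤:ℕ∞) : WithTop ℕ∞) := by exact_mod_cast le_top
  have hdcont : Continuous (deriv γ) := hsm'.continuous_deriv h1top
  have hdncont : Continuous (deriv (unitNormal γ)) := hn.continuous_deriv h1top
  obtain ⟨Mγ, hMγ⟩ := (isCompact_Icc (a := (0:ℝ)) (b := L)).exists_bound_of_continuousOn
    hsm'.continuous.continuousOn
  obtain ⟨M0, hM0⟩ := (isCompact_Icc (a := (0:ℝ)) (b := L)).exists_bound_of_continuousOn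
    hdcont.continuousOn
  obtain ⟨Mn, hMn⟩ := (isCompact_Icc (a := (0:ℝ)) (b := L)).exists_bound_of_continuousOn
    hdncont.continuousOn
  have h0L : (0:ℝ) ∈ Icc (0:ℝ) L := ⟨le_refl _, hL.le⟩
  have hMγ0 : 0 ≤ Mγ := le_trans (norm_nonneg _) (hMγ 0 h0L)
  have hM00 : 0 ≤ M0 := le_trans (norm_nonneg _) (hM0 0 h0L)
  have hMn0 : 0 ≤ Mn := le_trans (norm_nonneg _) (hMn 0 h0L)
  rcases K.eq_empty_or_nonempty with hKe | hKne
  · exact ⟨1, one_pos, 1, one_pos, fun f _ _ _ ε _ _ p hp => by simp [hKe] at hp⟩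
  obtain ⟨p0, hp0K, hp0⟩ := hK.exists_isMinOn hKne continuous_snd.continuousOn
  set tmin := p0.2 with htmindef
  have htmin : 0 < tmin := hKpos p0 hp0K
  obtain ⟨q0, hq0K, hq0⟩ := hK.exists_isMaxOn hKne
    ((continuous_norm.comp continuous_fst).continuousOn)
  set MK := ‖q0.1‖ with hMKdef
  have hMK0 : 0 ≤ MK := norm_nonneg _
  set R := Mγ + MK + 1 with hRdef
  have hR0 : 0 < R := by positivity
  set Mg := 1 + Mn with hMgdef
  have hMg1 : 1 ≤ Mg := by rw [hMgdef]; linarith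
  set P := (4 * π * tmin) ^ (-(1:ℝ)/2) with hPdef
  have hP0 : 0 < P := Real.rpow_pos_of_pos (by positivity) _
  set D := R * (M0 + Mg) / (2 * tmin) + Mg with hDdef
  have hDnn : 0 ≤ R * (M0 + Mg) / (2 * tmin) := by positivity
  have hD0 : 0 < D := by rw [hDdef]; linarith
  refine ⟨1, one_pos, P * L * D, by positivity, ?_⟩
  intro f hf hfper hfC2 ε hε0 hε1 p hp
  obtain ⟨x₀, t₀⟩ := p
  have ht₀ : 0 < t₀ := hKpos _ hp
  have htmin_le : tmin ≤ t₀ := hp0 hp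
  have hx₀ : ‖x₀‖ ≤ MK := by simpa [hMKdef] using hq0 hp
  have hf' : ContDiff ℝ (⊤:ℕ∞) f := hf.of_le (by simp)
  set σ := perturb γ (fun t => ε * f t) with hσdef
  have hσsm : ContDiff ℝ (⊤:ℕ∞) σ := hsm'.add ((contDiff_const.mul hf').smul hn)
  have hσd : ∀ t, HasDerivAt σ
      (deriv γ t + ((ε * f t) • deriv (unitNormal γ) t + (ε * deriv f t) • unitNormal γ t)) t := by
    intro t
    have h1 : HasDerivAt γ (deriv γ t) t := (hsm'.differentiable (by simp) t).hasDerivAt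
    have h2 : HasDerivAt (unitNormal γ) (deriv (unitNormal γ) t) t :=
      (hn.differentiable (by simp) t).hasDerivAt
    have h3 : HasDerivAt (fun u => ε * f u) (ε * deriv f t) t :=
      ((hf'.differentiable (by simp) t).hasDerivAt).const_mul ε
    exact h1.add (h3.smul h2)
  have hσderiv : ∀ t, deriv σ t =
      deriv γ t + ((ε * f t) • deriv (unitNormal γ) t + (ε * deriv f t) • unitNormal γ t) :=
    fun t => (hσd t).deriv
  have hdiffbd : ∀ t ∈ Icc (0:ℝ) L, ‖deriv σ t - deriv γ t‖ ≤ ε * Mg := by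
    intro t ht
    rw [hσderiv t]
    have h1 : ‖(ε * deriv f t) • unitNormal γ t‖ ≤ ε * 1 := by
      rw [norm_smul, hnn, mul_one, Real.norm_eq_abs, abs_mul, abs_of_nonneg hε0]
      exact mul_le_mul_of_nonneg_left (hfC2 t).2.1 hε0
    have h2 : ‖(ε * f t) • deriv (unitNormal γ) t‖ ≤ ε * Mn := by
      rw [norm_smul, Real.norm_eq_abs, abs_mul, abs_of_nonneg hε0]
      exact mul_le_mul (mul_le_of_le_one_right hε0 (hfC2 t).1) (hMn t ht)
        (norm_nonneg _) hε0
    calc ‖deriv γ t + ((ε * f t) • deriv (unitNormal γ) t + (ε * deriv f t) • unitNormal γ t)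
          - deriv γ t‖
        = ‖(ε * f t) • deriv (unitNormal γ) t + (ε * deriv f t) • unitNormal γ t‖ := by
          congr 1; abel
      _ ≤ ε * Mn + ε * 1 := norm_add_le_of_le h2 h1
      _ = ε * Mg := by rw [hMgdef]; ring
  have hσdbd : ∀ t ∈ Icc (0:ℝ) L, ‖deriv σ t‖ ≤ M0 + Mg := by
    intro t ht
    have h1 := norm_sub_norm_le (deriv σ t) (deriv γ t)
    have h2 := hdiffbd t ht
    have h3 := hM0 t ht
    have h4 : ε * Mg ≤ 1 * Mg := mul_le_mul_of_nonneg_right hε1.le (by linarith)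
    linarith
  have hposbd : ∀ t, ‖σ t - γ t‖ ≤ ε := by
    intro t
    have he : σ t - γ t = (ε * f t) • unitNormal γ t := by
      rw [hσdef]; simp [perturb]
    rw [he, norm_smul, hnn, mul_one, Real.norm_eq_abs, abs_mul, abs_of_nonneg hε0]
    exact mul_le_of_le_one_right hε0 (hfC2 t).1
  set h₁ : ℝ → ℝ := fun t => Real.exp (-‖σ t - x₀‖ ^ 2 / (4 * t₀)) * ‖deriv σ t‖ with hh₁
  set h₂ : ℝ → ℝ := fun t => Real.exp (-‖γ t - x₀‖ ^ 2 / (4 * t₀)) * ‖deriv γ t‖ with hh₂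
  have hc₁ : Continuous h₁ := by
    apply Continuous.mul
    · exact Real.continuous_exp.comp
        (((hσsm.continuous.sub continuous_const).norm.pow 2).neg.div_const _)
    · exact (hσsm.continuous_deriv h1top).norm
  have hc₂ : Continuous h₂ := by
    apply Continuous.mul
    · exact Real.continuous_exp.comp
        (((hsm'.continuous.sub continuous_const).norm.pow 2).neg.div_const _)
    · exact hdcont.norm
  have hpt : ∀ t ∈ Set.uIoc (0:ℝ) L, ‖h₁ t - h₂ t‖ ≤ D * ε := by
    intro t ht'
    have ht : t ∈ Icc (0:ℝ) L := by
      rw [Set.uIoc_of_le hL.le] at ht'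
      exact ⟨ht'.1.le, ht'.2⟩
    set a := ‖σ t - x₀‖ ^ 2 / (4 * t₀) with hadef
    set b := ‖γ t - x₀‖ ^ 2 / (4 * t₀) with hbdef
    have ha0 : 0 ≤ a := by positivity
    have hb0 : 0 ≤ b := by positivity
    have hvb : ‖γ t - x₀‖ ≤ R := by
      have h2 : ‖γ t - x₀‖ ≤ Mγ + MK := le_trans (norm_sub_le _ _)
        (add_le_add (hMγ t ht) hx₀)
      rw [hRdef]; linarith
    have hub : ‖σ t - x₀‖ ≤ R := by
      have h0 : σ t - x₀ = (σ t - γ t) + (γ t - x₀) := by abel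
      have h1 := hposbd t
      have h2 : ‖γ t - x₀‖ ≤ Mγ + MK := le_trans (norm_sub_le _ _)
        (add_le_add (hMγ t ht) hx₀)
      calc ‖σ t - x₀‖ ≤ ‖σ t - γ t‖ + ‖γ t - x₀‖ := by rw [h0]; exact norm_add_le _ _
        _ ≤ R := by rw [hRdef]; linarith
    have habdiff : |a - b| ≤ ε * R / (2 * tmin) := by
      have h1 : |‖σ t - x₀‖ - ‖γ t - x₀‖| ≤ ε := by
        refine le_trans (abs_norm_sub_norm_le _ _) ?_
        have he : σ t - x₀ - (γ t - x₀) = σ t - γ t := by abel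
        rw [he]; exact hposbd t
      have h2 : |‖σ t - x₀‖ ^ 2 - ‖γ t - x₀‖ ^ 2| ≤ ε * (2 * R) := by
        have he : ‖σ t - x₀‖ ^ 2 - ‖γ t - x₀‖ ^ 2
            = (‖σ t - x₀‖ - ‖γ t - x₀‖) * (‖σ t - x₀‖ + ‖γ t - x₀‖) := by ring
        rw [he, abs_mul]
        have h3 : |‖σ t - x₀‖ + ‖γ t - x₀‖| ≤ 2 * R := by
          rw [abs_of_nonneg (by positivity)]; linarith
        exact mul_le_mul h1 h3 (abs_nonneg _) hε0
      have h4 : a - b = (‖σ t - x₀‖ ^ 2 - ‖γ t - x₀‖ ^ 2) / (4 * t₀) := by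
        rw [hadef, hbdef]; ring
      rw [h4, abs_div, abs_of_pos (by positivity : (0:ℝ) < 4 * t₀),
        div_le_div_iff₀ (by positivity) (by positivity)]
      calc |‖σ t - x₀‖ ^ 2 - ‖γ t - x₀‖ ^ 2| * (2 * tmin)
          ≤ (ε * (2 * R)) * (2 * t₀) := by
            apply mul_le_mul h2 (by linarith) (by positivity) (by positivity)
        _ = ε * R * (4 * t₀) := by ring
    have hexp : |Real.exp (-a) - Real.exp (-b)| ≤ ε * R / (2 * tmin) :=
      le_trans (aux_exp_lip ha0 hb0) habdiff
    have e1 : h₁ t = Real.exp (-a) * ‖deriv σ t‖ := by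
      rw [hh₁]; simp only; rw [hadef, neg_div]
    have e2 : h₂ t = Real.exp (-b) * ‖deriv γ t‖ := by
      rw [hh₂]; simp only; rw [hbdef, neg_div]
    have hX : ‖deriv σ t‖ ≤ M0 + Mg := hσdbd t ht
    have hXY : |‖deriv σ t‖ - ‖deriv γ t‖| ≤ ε * Mg :=
      le_trans (abs_norm_sub_norm_le _ _) (hdiffbd t ht)
    have heb : Real.exp (-b) ≤ 1 := Real.exp_le_one_iff.mpr (by linarith)
    calc ‖h₁ t - h₂ t‖
        = |(Real.exp (-a) - Real.exp (-b)) * ‖deriv σ t‖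
            + Real.exp (-b) * (‖deriv σ t‖ - ‖deriv γ t‖)| := by
          rw [Real.norm_eq_abs, e1, e2]; congr 1; ring
      _ ≤ |Real.exp (-a) - Real.exp (-b)| * ‖deriv σ t‖
            + Real.exp (-b) * |‖deriv σ t‖ - ‖deriv γ t‖| := by
          refine le_trans (abs_add_le _ _) ?_
          rw [abs_mul, abs_mul, abs_of_nonneg (norm_nonneg _),
            abs_of_nonneg (Real.exp_pos _).le]
      _ ≤ (ε * R / (2 * tmin)) * (M0 + Mg) + 1 * (ε * Mg) := by
          refine add_le_add (mul_le_mul hexp hX (norm_nonneg _) ?_)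
            (mul_le_mul heb hXY (abs_nonneg _) one_pos.le)
          exact div_nonneg (mul_nonneg hε0 hR0.le) (by positivity)
      _ = D * ε := by rw [hDdef]; field_simp
  have hint₁ : IntervalIntegrable h₁ volume 0 L := hc₁.intervalIntegrable _ _
  have hint₂ : IntervalIntegrable h₂ volume 0 L := hc₂.intervalIntegrable _ _
  have hIdiff : (∫ t in (0:ℝ)..L, h₁ t) - ∫ t in (0:ℝ)..L, h₂ t
      = ∫ t in (0:ℝ)..L, (h₁ t - h₂ t) := (intervalIntegral.integral_sub hint₁ hint₂).symm
  have hIb : |(∫ t in (0:ℝ)..L, h₁ t) - ∫ t in (0:ℝ)..L, h₂ t| ≤ D * ε * L := by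
    rw [hIdiff]
    have hb := intervalIntegral.norm_integral_le_of_norm_le_const (C := D * ε)
      (f := fun t => h₁ t - h₂ t) hpt
    rw [Real.norm_eq_abs] at hb
    simpa [abs_of_nonneg hL.le] using hb
  have hP' : (4 * π * t₀ : ℝ) ^ (-(1:ℝ)/2) ≤ P := by
    rw [hPdef]
    exact Real.rpow_le_rpow_of_nonpos (by positivity)
      (by nlinarith [Real.pi_pos]) (by norm_num)
  have hP'0 : (0:ℝ) ≤ (4 * π * t₀) ^ (-(1:ℝ)/2) :=
    (Real.rpow_pos_of_pos (by positivity) _).le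
  have hFσ : Ffun L σ x₀ t₀ = (4 * π * t₀) ^ (-(1:ℝ)/2) * ∫ t in (0:ℝ)..L, h₁ t := rfl
  have hFγ : Ffun L γ x₀ t₀ = (4 * π * t₀) ^ (-(1:ℝ)/2) * ∫ t in (0:ℝ)..L, h₂ t := rfl
  show |Ffun L σ x₀ t₀ - Ffun L γ x₀ t₀| ≤ P * L * D * ε
  rw [hFσ, hFγ, ← mul_sub, abs_mul, abs_of_nonneg hP'0]
  calc (4 * π * t₀) ^ (-(1:ℝ)/2) * |(∫ t in (0:ℝ)..L, h₁ t) - ∫ t in (0:ℝ)..L, h₂ t|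
      ≤ P * (D * ε * L) := mul_le_mul hP' hIb (abs_nonneg _) hP0.le
    _ = P * L * D * ε := by ring
end
end

section
/- Let γ be a closed immersed plane curve of period L with unit normal n. If y ∈ ℝ² satisfies ⟨y, n(t)⟩ = 0 for all t ∈ ℝ, then y = 0. In other words, the two component functions n₁, n₂ of the unit normal are linearly independent. -/
noncomputable section

open Real MeasureTheory Set Filter RealInnerProductSpace

private lemma aux_pos (L : ℝ) (γ : ℝ → Pt) (hγ : IsClosedCurve L γ) (y : Pt)
    (hne : ∀ t, ⟪y, deriv γ t⟫ ≠ 0) (hpos : 0 < ⟪y, deriv γ 0⟫) : False := by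
  obtain ⟨hL, hsm, hper, hdne⟩ := hγ
  have hcd : Continuous (deriv γ) := hsm.continuous_deriv (by simp)
  set g : ℝ → ℝ := fun t => ⟪y, deriv γ t⟫ with hgdef
  have hgc : Continuous g := continuous_const.inner hcd
  have hgpos : ∀ t, 0 < g t := by
    intro t
    by_contra h
    have hlt : g t < 0 := lt_of_le_of_ne (not_lt.mp h) (hne t)
    have h0 : (0:ℝ) ∈ uIcc (g 0) (g t) := by
      rw [Set.mem_uIcc]; right; exact ⟨hlt.le, hpos.le⟩
    obtain ⟨s, _, hs⟩ := intermediate_value_uIcc (a := 0) (b := t) hgc.continuousOn h0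
    exact hne s hs
  have hderiv : ∀ t ∈ uIcc (0:ℝ) L, HasDerivAt (fun u => ⟪y, γ u⟫) (g t) t := by
    intro t _
    have h1 : HasDerivAt γ (deriv γ t) t := (hsm.differentiable (by simp) t).hasDerivAt
    exact (innerSL ℝ y).hasFDerivAt.comp_hasDerivAt t h1
  have hint : IntervalIntegrable g volume 0 L := hgc.intervalIntegrable _ _
  have heq : ∫ t in (0:ℝ)..L, g t = ⟪y, γ L⟫ - ⟪y, γ 0⟫ :=
    intervalIntegral.integral_eq_sub_of_hasDerivAt hderiv hint
  have hγL : γ L = γ 0 := by simpa using hper 0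
  have hzero : ∫ t in (0:ℝ)..L, g t = 0 := by rw [heq, hγL]; ring
  have : 0 < ∫ t in (0:ℝ)..L, g t :=
    intervalIntegral.intervalIntegral_pos_of_pos_on hint (fun t _ => hgpos t) hL
  linarith


/-- the component functions of the unit normal of a closed immersed
plane curve are linearly independent: if `⟨y, n(t)⟩ = 0` for all `t`, then `y = 0`. -/
theorem normal_components_linearly_independent (L : ℝ) (γ : ℝ → Pt)
    (hγ : IsClosedCurve L γ) (y : Pt) (hy : ∀ t : ℝ, ⟪y, unitNormal γ t⟫ = 0) :
    y = 0 := by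
  by_contra hy0
  have hcoord : ¬ (y 0 = 0 ∧ y 1 = 0) := by
    rintro ⟨h0, h1⟩; exact hy0 (by ext i; fin_cases i <;> simpa)
  have hab : 0 < y 0 ^ 2 + y 1 ^ 2 := by
    rcases not_and_or.mp hcoord with h | h <;> positivity
  have key : ∀ t, y 0 * deriv γ t 1 = y 1 * deriv γ t 0 := by
    intro t
    have h := hy t
    have hvn : ‖deriv γ t‖ ≠ 0 := norm_ne_zero_iff.mpr (hγ.2.2.2 t)
    simp only [unitNormal, unitTangent, vec2, PiLp.inner_apply, Fin.sum_univ_two,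
      WithLp.equiv_symm_apply, PiLp.toLp_apply, Matrix.cons_val_zero, Matrix.cons_val_one, Matrix.head_cons,
      PiLp.smul_apply, smul_eq_mul, RCLike.inner_apply, conj_trivial] at h
    field_simp at h
    linarith
  have hne : ∀ t, ⟪y, deriv γ t⟫ ≠ 0 := by
    intro t h
    have hip : y 0 * deriv γ t 0 + y 1 * deriv γ t 1 = 0 := by
      simpa [PiLp.inner_apply, Fin.sum_univ_two, mul_comm] using h
    have hk := key t
    have h1 : (y 0 ^ 2 + y 1 ^ 2) * ((deriv γ t 0) ^ 2 + (deriv γ t 1) ^ 2) = 0 := by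
      linear_combination (y 0 * deriv γ t 0 + y 1 * deriv γ t 1) * hip +
        (y 0 * deriv γ t 1 - y 1 * deriv γ t 0) * hk
    have hsum : (deriv γ t 0) ^ 2 + (deriv γ t 1) ^ 2 = 0 :=
      (mul_eq_zero.mp h1).resolve_left hab.ne'
    have hc0 : deriv γ t 0 = 0 := by nlinarith [sq_nonneg (deriv γ t 0), sq_nonneg (deriv γ t 1)]
    have hc1 : deriv γ t 1 = 0 := by nlinarith [sq_nonneg (deriv γ t 0), sq_nonneg (deriv γ t 1)]
    exact hγ.2.2.2 t (by ext i; fin_cases i <;> simp [hc0, hc1])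
  rcases lt_or_gt_of_ne (hne 0) with hneg | hpos
  · refine aux_pos L γ hγ (-y) (fun t => ?_) ?_
    · rw [inner_neg_left, neg_ne_zero]; exact hne t
    · rw [inner_neg_left]; exact neg_pos.mpr hneg
  · exact aux_pos L γ hγ y hne hpos
end
end

section
/- Let γ be a closed immersed plane curve of period L that is a unit-speed shrinker whose signed curvature satisfies k(s) ≠ 0 for all s. Then ⟨γ(s), γ'(s)⟩ = 2·k'(s)/k(s) for all s, and the function u(s) = k'(s)/k(s) satisfies the Jacobi equation u''(s) − (k'(s)/k(s))·u'(s) + (k(s)² + 1/2)·u(s) = 0 for all s (i.e. L u = 0 where L is the Jacobi operator of the shrinker). -/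
noncomputable section

open Real MeasureTheory Set Filter RealInnerProductSpace

/-- for a closed unit-speed shrinker with nonvanishing curvature,
`⟨γ, γ'⟩ = 2k'/k` and `u = k'/k` lies in the kernel of the Jacobi operator
`L u = u'' − (k'/k) u' + (k² + 1/2) u`. -/
theorem jacobi_field_of_shrinker (L : ℝ) (γ : ℝ → Pt)
    (hγ : IsClosedCurve L γ) (hs : IsShrinker γ)
    (hunit : ∀ s : ℝ, ‖deriv γ s‖ = 1) (hk : ∀ s : ℝ, curvature γ s ≠ 0) :
    (∀ s : ℝ, ⟪γ s, deriv γ s⟫ = 2 * deriv (curvature γ) s / curvature γ s) ∧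
    (∀ s : ℝ,
      deriv (deriv (fun r => deriv (curvature γ) r / curvature γ r)) s
        - (deriv (curvature γ) s / curvature γ s) *
            deriv (fun r => deriv (curvature γ) r / curvature γ r) s
        + (curvature γ s ^ 2 + 1/2) * (deriv (curvature γ) s / curvature γ s) = 0) := by
  obtain ⟨hL, hsm, hper, hne⟩ := hγ
  have hdiff : Differentiable ℝ γ := hsm.differentiable (by simp)
  have hdiff' : Differentiable ℝ (deriv γ) :=
    (contDiff_infty_iff_deriv.mp (hsm.of_le (by simp))).2.differentiable (by simp)
  -- coordinate derivatives
  have hA : ∀ (i : Fin 2) (s : ℝ), HasDerivAt (fun t => γ t i) (deriv γ s i) s := fun i s =>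
    (EuclideanSpace.proj i : Pt →L[ℝ] ℝ).hasFDerivAt.comp_hasDerivAt s (hdiff s).hasDerivAt
  have hB : ∀ (i : Fin 2) (s : ℝ),
      HasDerivAt (fun t => deriv γ t i) (deriv (deriv γ) s i) s := fun i s =>
    (EuclideanSpace.proj i : Pt →L[ℝ] ℝ).hasFDerivAt.comp_hasDerivAt s (hdiff' s).hasDerivAt
  -- unit speed in coordinates
  have hC : ∀ s, deriv γ s 0 ^ 2 + deriv γ s 1 ^ 2 = 1 := by
    intro s
    have h2 : ⟪deriv γ s, deriv γ s⟫ = 1 := by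
      rw [real_inner_self_eq_norm_sq, hunit s]; norm_num
    simp only [PiLp.inner_apply, Fin.sum_univ_two, RCLike.inner_apply, conj_trivial] at h2
    linear_combination h2
  -- orthogonality of acceleration
  have hD : ∀ s, deriv γ s 0 * deriv (deriv γ) s 0 + deriv γ s 1 * deriv (deriv γ) s 1 = 0 := by
    intro s
    have h1 : HasDerivAt (fun t => deriv γ t 0 ^ 2 + deriv γ t 1 ^ 2)
        (2 * deriv γ s 0 ^ 1 * deriv (deriv γ) s 0 + 2 * deriv γ s 1 ^ 1 * deriv (deriv γ) s 1)
        s := ((hB 0 s).pow 2).add ((hB 1 s).pow 2)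
    have h2 : HasDerivAt (fun t => deriv γ t 0 ^ 2 + deriv γ t 1 ^ 2) 0 s := by
      have : (fun t => deriv γ t 0 ^ 2 + deriv γ t 1 ^ 2) = fun _ => (1:ℝ) := funext hC
      rw [this]; exact hasDerivAt_const s 1
    have := h1.unique h2
    nlinarith [this]
  -- curvature in coordinates
  have hcurv : ∀ s, curvature γ s =
      deriv γ s 0 * deriv (deriv γ) s 1 - deriv γ s 1 * deriv (deriv γ) s 0 := by
    intro s; rw [curvature, hunit s]; norm_num
  -- Frenet equations
  have hG1 : ∀ s, deriv (deriv γ) s 0 = -(curvature γ s) * deriv γ s 1 := by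
    intro s; rw [hcurv s]
    linear_combination (-(deriv (deriv γ) s 0)) * hC s + (deriv γ s 0) * hD s
  have hG2 : ∀ s, deriv (deriv γ) s 1 = curvature γ s * deriv γ s 0 := by
    intro s; rw [hcurv s]
    linear_combination (-(deriv (deriv γ) s 1)) * hC s + (deriv γ s 1) * hD s
  -- shrinker equation in coordinates
  have hKP : ∀ s, curvature γ s = (γ s 0 * deriv γ s 1 - γ s 1 * deriv γ s 0) / 2 := by
    intro s
    rw [hs s]
    have hT : ∀ i, unitTangent γ s i = deriv γ s i := by
      intro i; simp [unitTangent, hunit s]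
    simp [PiLp.inner_apply, Fin.sum_univ_two, unitNormal, vec2, hT]
    ring
  have heq : curvature γ = fun s => (γ s 0 * deriv γ s 1 - γ s 1 * deriv γ s 0) / 2 :=
    funext hKP
  -- inner product in coordinates
  have hP : ∀ s, ⟪γ s, deriv γ s⟫ = γ s 0 * deriv γ s 0 + γ s 1 * deriv γ s 1 := by
    intro s; simp [PiLp.inner_apply, Fin.sum_univ_two]; ring
  -- derivative of curvature
  have hKd : ∀ s, HasDerivAt (curvature γ)
      (curvature γ s * (γ s 0 * deriv γ s 0 + γ s 1 * deriv γ s 1) / 2) s := by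
    intro s
    have hraw : HasDerivAt (curvature γ)
        ((deriv γ s 0 * deriv γ s 1 + γ s 0 * deriv (deriv γ) s 1 -
          (deriv γ s 1 * deriv γ s 0 + γ s 1 * deriv (deriv γ) s 0)) / 2) s := by
      rw [heq]
      exact (((hA 0 s).mul (hB 1 s)).sub ((hA 1 s).mul (hB 0 s))).div_const 2
    convert hraw using 1
    rw [hG1 s, hG2 s]; ring
  have hkd : ∀ s, deriv (curvature γ) s =
      curvature γ s * (γ s 0 * deriv γ s 0 + γ s 1 * deriv γ s 1) / 2 := fun s => (hKd s).deriv
  -- u = P/2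
  have hu : (fun r => deriv (curvature γ) r / curvature γ r) =
      fun r => (γ r 0 * deriv γ r 0 + γ r 1 * deriv γ r 1) / 2 := by
    funext r; rw [hkd r, mul_div_assoc, mul_div_cancel_left₀ _ (hk r)]
  -- derivative of u
  have hud : ∀ s, HasDerivAt (fun r => deriv (curvature γ) r / curvature γ r)
      (1/2 - curvature γ s ^ 2) s := by
    intro s
    rw [hu]
    have hraw : HasDerivAt (fun r => (γ r 0 * deriv γ r 0 + γ r 1 * deriv γ r 1) / 2)
        ((deriv γ s 0 * deriv γ s 0 + γ s 0 * deriv (deriv γ) s 0 +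
          (deriv γ s 1 * deriv γ s 1 + γ s 1 * deriv (deriv γ) s 1)) / 2) s :=
      (((hA 0 s).mul (hB 0 s)).add ((hA 1 s).mul (hB 1 s))).div_const 2
    convert hraw using 1
    rw [hG1 s, hG2 s]
    linear_combination (-1/2) * hC s - curvature γ s * hKP s
  have hu' : deriv (fun r => deriv (curvature γ) r / curvature γ r) =
      fun s => 1/2 - curvature γ s ^ 2 := funext fun s => (hud s).deriv
  have hu'' : ∀ s, deriv (deriv (fun r => deriv (curvature γ) r / curvature γ r)) s =
      -(curvature γ s ^ 2 * (γ s 0 * deriv γ s 0 + γ s 1 * deriv γ s 1)) := by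
    intro s
    rw [hu']
    have h := ((hasDerivAt_const s ((1:ℝ)/2)).sub ((hKd s).pow 2)).deriv
    rw [show (fun s => 1/2 - curvature γ s ^ 2) = (fun _ => (1:ℝ)/2) - curvature γ ^ 2 from rfl, h]; push_cast; ring
  constructor
  · intro s
    rw [hP s, hkd s]
    field_simp [hk s]
  · intro s
    rw [hu'' s, hkd s]
    rw [show deriv (fun r => deriv (curvature γ) r / curvature γ r) s
        = 1/2 - curvature γ s ^ 2 from (hud s).deriv]
    field_simp [hk s]
    ring
end
end
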